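/- Let r, X : ℂ² → ℝ be smooth, P = 1 + X, ρ = r·(1 + Kr + X), and suppose p satisfies r(p) = 0, H_r(p) positive semidefinite, H_r(L_r, L_r)(p) = 0 with L_r(p) ≠ 0. If H_ρ(p) is positive semidefinite then L_r(P)(p) := r_w(p)·P_z(p) − r_z(p)·P_w(p) = 0. -/

import Mathlib

open Complex Matrix ComplexConjugate
open scoped ComplexOrder

noncomputable section

/-- Wirtinger derivative ∂/∂z of a complex-valued function on ℂ². -/
def wzC (g : ℂ × ℂ → ℂ) (p : ℂ × ℂ) : ℂ :=
  (fderiv ℝ g p (1, 0) - Complex.I * fderiv ℝ g p (Complex.I, 0)) / 2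

/-- Wirtinger derivative ∂/∂z̄ of a complex-valued function on ℂ². -/
def wzbarC (g : ℂ × ℂ → ℂ) (p : ℂ × ℂ) : ℂ :=
  (fderiv ℝ g p (1, 0) + Complex.I * fderiv ℝ g p (Complex.I, 0)) / 2

/-- Wirtinger derivative ∂/∂w of a complex-valued function on ℂ². -/
def wwC (g : ℂ × ℂ → ℂ) (p : ℂ × ℂ) : ℂ :=
  (fderiv ℝ g p (0, 1) - Complex.I * fderiv ℝ g p (0, Complex.I)) / 2

/-- Wirtinger derivative ∂/∂w̄ of a complex-valued function on ℂ². -/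
def wwbarC (g : ℂ × ℂ → ℂ) (p : ℂ × ℂ) : ℂ :=
  (fderiv ℝ g p (0, 1) + Complex.I * fderiv ℝ g p (0, Complex.I)) / 2

/-- f_z for a real-valued function f on ℂ². -/
def wz (f : ℂ × ℂ → ℝ) : ℂ × ℂ → ℂ := wzC (fun q => (f q : ℂ))

/-- f_w for a real-valued function f on ℂ². -/
def ww (f : ℂ × ℂ → ℝ) : ℂ × ℂ → ℂ := wwC (fun q => (f q : ℂ))

/-- f_{z z̄} -/
def hzz (f : ℂ × ℂ → ℝ) : ℂ × ℂ → ℂ := wzbarC (wz f)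

/-- f_{w w̄} -/
def hww (f : ℂ × ℂ → ℝ) : ℂ × ℂ → ℂ := wwbarC (ww f)

/-- f_{z w̄} -/
def hzw (f : ℂ × ℂ → ℝ) : ℂ × ℂ → ℂ := wwbarC (wz f)

/-- The complex Hessian matrix H_f = [[f_{zz̄}, f_{zw̄}],[f_{z̄w}, f_{ww̄}]]. -/
def hessMat (f : ℂ × ℂ → ℝ) (p : ℂ × ℂ) : Matrix (Fin 2) (Fin 2) ℂ :=
  !![hzz f p, hzw f p; conj (hzw f p), hww f p]

/-- The complex Hessian acting on vectors: H_f(V,W) = V · H_f · conj(W)ᵀ. -/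
def Hform (f : ℂ × ℂ → ℝ) (p : ℂ × ℂ) (V W : ℂ × ℂ) : ℂ :=
  hzz f p * V.1 * conj W.1 + hww f p * V.2 * conj W.2
    + hzw f p * V.1 * conj W.2 + conj (hzw f p) * V.2 * conj W.1

/-- The determinant of the complex Hessian, 𝓗_f = f_{zz̄} f_{ww̄} − |f_{zw̄}|², as a real number. -/
def scrH (f : ℂ × ℂ → ℝ) (p : ℂ × ℂ) : ℝ :=
  (hzz f p * hww f p).re - ‖hzw f p‖ ^ 2

/-- L_f = f_w ∂/∂z − f_z ∂/∂w, identified with the vector (f_w, −f_z). -/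
def Lvec (f : ℂ × ℂ → ℝ) (p : ℂ × ℂ) : ℂ × ℂ := (ww f p, - wz f p)

/-- B_P = 4 Re(r_z P_z̄) Re(r_w P_w̄) − |r_z P_w̄ + r_w̄ P_z|². -/
def BP (r P : ℂ × ℂ → ℝ) (p : ℂ × ℂ) : ℝ :=
  4 * (wz r p * conj (wz P p)).re * (ww r p * conj (ww P p)).re
    - ‖wz r p * conj (ww P p) + conj (ww r p) * wz P p‖ ^ 2

/-- Q_P = r_{zz̄} P_{ww̄} + r_{ww̄} P_{zz̄} − 2 Re(r_{zw̄} P_{z̄w}). -/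
def QP (r P : ℂ × ℂ → ℝ) (p : ℂ × ℂ) : ℝ :=
  (hzz r p * hww P p + hww r p * hzz P p).re - 2 * (hzw r p * conj (hzw P p)).re

end

/-! ### Auxiliary machinery -/

noncomputable section Aux

/-- A generic "Wirtinger-type" first-order operator `g ↦ (D g v₁ + s • D g v₂)/2`. -/
def wop (v₁ v₂ : ℂ × ℂ) (s : ℂ) (g : ℂ × ℂ → ℂ) (p : ℂ × ℂ) : ℂ :=
  (fderiv ℝ g p v₁ + s * fderiv ℝ g p v₂) / 2

variable {v₁ v₂ : ℂ × ℂ} {s : ℂ} {u v g : ℂ × ℂ → ℂ} {p : ℂ × ℂ} {f : ℂ × ℂ → ℝ}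

lemma wop_add (hu : DifferentiableAt ℝ u p) (hv : DifferentiableAt ℝ v p) :
    wop v₁ v₂ s (fun q => u q + v q) p = wop v₁ v₂ s u p + wop v₁ v₂ s v p := by
  simp only [wop, fderiv_fun_add hu hv, ContinuousLinearMap.add_apply]; ring

lemma wop_mul (hu : DifferentiableAt ℝ u p) (hv : DifferentiableAt ℝ v p) :
    wop v₁ v₂ s (fun q => u q * v q) p = u p * wop v₁ v₂ s v p + v p * wop v₁ v₂ s u p := by
  simp only [wop, fderiv_fun_mul hu hv, ContinuousLinearMap.add_apply,
    ContinuousLinearMap.smul_apply, smul_eq_mul]; ring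

lemma wop_const_mul (hu : DifferentiableAt ℝ u p) (a : ℂ) :
    wop v₁ v₂ s (fun q => a * u q) p = a * wop v₁ v₂ s u p := by
  simp only [wop, fderiv_const_mul hu a, ContinuousLinearMap.smul_apply, smul_eq_mul]; ring

lemma contDiff_ofReal_comp (hf : ContDiff ℝ (⊤ : ℕ∞) f) :
    ContDiff ℝ (⊤ : ℕ∞) (fun q => ((f q : ℝ) : ℂ)) :=
  Complex.ofRealCLM.contDiff.comp hf

lemma contDiff_fderiv_apply (hg : ContDiff ℝ (⊤ : ℕ∞) g) (v : ℂ × ℂ) :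
    ContDiff ℝ (⊤ : ℕ∞) (fun q => fderiv ℝ g q v) :=
  (ContinuousLinearMap.apply ℝ ℂ v).contDiff.comp (hg.fderiv_right (by simp))

lemma contDiff_wop (hg : ContDiff ℝ (⊤ : ℕ∞) g) : ContDiff ℝ (⊤ : ℕ∞) (wop v₁ v₂ s g) :=
  ((contDiff_fderiv_apply hg v₁).add (contDiff_const.mul (contDiff_fderiv_apply hg v₂))).div_const 2

lemma fderiv_ofReal_comp (hf : DifferentiableAt ℝ f p) (v : ℂ × ℂ) :
    fderiv ℝ (fun q => ((f q : ℝ) : ℂ)) p v = ((fderiv ℝ f p v : ℝ) : ℂ) := by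
  have h : HasFDerivAt (fun q => ((f q : ℝ) : ℂ))
      (Complex.ofRealCLM.comp (fderiv ℝ f p)) p :=
    Complex.ofRealCLM.hasFDerivAt.comp p hf.hasFDerivAt
  rw [h.fderiv]; simp

lemma conj_wop_real (hf : DifferentiableAt ℝ f p) :
    conj (wop v₁ v₂ s (fun q => ((f q : ℝ) : ℂ)) p)
      = wop v₁ v₂ (conj s) (fun q => ((f q : ℝ) : ℂ)) p := by
  rw [wop, wop, fderiv_ofReal_comp hf v₁, fderiv_ofReal_comp hf v₂]
  simp [map_div₀, Complex.conj_ofReal, map_ofNat]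

lemma wop_bar_real (hf : DifferentiableAt ℝ f p) :
    wop v₁ v₂ Complex.I (fun q => ((f q : ℝ) : ℂ)) p
      = conj (wop v₁ v₂ (-Complex.I) (fun q => ((f q : ℝ) : ℂ)) p) := by
  rw [conj_wop_real hf, map_neg, Complex.conj_I, neg_neg]

lemma wz_eq (f : ℂ × ℂ → ℝ) :
    wz f = wop (1, 0) (Complex.I, 0) (-Complex.I) (fun q => ((f q : ℝ) : ℂ)) := by
  funext p; simp only [wz, wzC, wop]; ring

lemma ww_eq (f : ℂ × ℂ → ℝ) :
    ww f = wop (0, 1) (0, Complex.I) (-Complex.I) (fun q => ((f q : ℝ) : ℂ)) := by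
  funext p; simp only [ww, wwC, wop]; ring

lemma hzz_eq (f : ℂ × ℂ → ℝ) (p : ℂ × ℂ) :
    hzz f p = wop (1, 0) (Complex.I, 0) Complex.I
      (wop (1, 0) (Complex.I, 0) (-Complex.I) (fun q => ((f q : ℝ) : ℂ))) p := by
  show wzbarC (wz f) p = _
  rw [wz_eq]; rfl

lemma hzw_eq (f : ℂ × ℂ → ℝ) (p : ℂ × ℂ) :
    hzw f p = wop (0, 1) (0, Complex.I) Complex.I
      (wop (1, 0) (Complex.I, 0) (-Complex.I) (fun q => ((f q : ℝ) : ℂ))) p := by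
  show wwbarC (wz f) p = _
  rw [wz_eq]; rfl

lemma hww_eq (f : ℂ × ℂ → ℝ) (p : ℂ × ℂ) :
    hww f p = wop (0, 1) (0, Complex.I) Complex.I
      (wop (0, 1) (0, Complex.I) (-Complex.I) (fun q => ((f q : ℝ) : ℂ))) p := by
  show wwbarC (ww f) p = _
  rw [ww_eq]; rfl

/-- Second-order mixed derivative of a product `f₁ * f₂` at a point where `f₁` vanishes. -/
lemma hess_prod (u₁ u₂ w₁ w₂ : ℂ × ℂ) {f₁ f₂ : ℂ × ℂ → ℝ}
    (h₁ : ContDiff ℝ (⊤ : ℕ∞) f₁) (h₂ : ContDiff ℝ (⊤ : ℕ∞) f₂) {p : ℂ × ℂ} (hp : f₁ p = 0) :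
    wop u₁ u₂ Complex.I
        (wop w₁ w₂ (-Complex.I) (fun q => ((f₁ q * f₂ q : ℝ) : ℂ))) p
      = ((f₂ p : ℝ) : ℂ) * wop u₁ u₂ Complex.I
            (wop w₁ w₂ (-Complex.I) (fun q => ((f₁ q : ℝ) : ℂ))) p
        + wop w₁ w₂ (-Complex.I) (fun q => ((f₂ q : ℝ) : ℂ)) p
            * conj (wop u₁ u₂ (-Complex.I) (fun q => ((f₁ q : ℝ) : ℂ)) p)
        + wop w₁ w₂ (-Complex.I) (fun q => ((f₁ q : ℝ) : ℂ)) p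
            * conj (wop u₁ u₂ (-Complex.I) (fun q => ((f₂ q : ℝ) : ℂ)) p) := by
  have hd1 : Differentiable ℝ (fun q => ((f₁ q : ℝ) : ℂ)) :=
    (contDiff_ofReal_comp h₁).differentiable (by simp)
  have hd2 : Differentiable ℝ (fun q => ((f₂ q : ℝ) : ℂ)) :=
    (contDiff_ofReal_comp h₂).differentiable (by simp)
  have hw1 : ContDiff ℝ (⊤ : ℕ∞) (wop w₁ w₂ (-Complex.I) (fun q => ((f₁ q : ℝ) : ℂ))) :=
    contDiff_wop (contDiff_ofReal_comp h₁)
  have hw2 : ContDiff ℝ (⊤ : ℕ∞) (wop w₁ w₂ (-Complex.I) (fun q => ((f₂ q : ℝ) : ℂ))) :=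
    contDiff_wop (contDiff_ofReal_comp h₂)
  have hmul : (fun q => ((f₁ q * f₂ q : ℝ) : ℂ))
      = fun q => ((f₁ q : ℝ) : ℂ) * ((f₂ q : ℝ) : ℂ) := by
    funext q; push_cast; ring
  have hfirst : wop w₁ w₂ (-Complex.I) (fun q => ((f₁ q * f₂ q : ℝ) : ℂ))
      = fun q => ((f₁ q : ℝ) : ℂ) * wop w₁ w₂ (-Complex.I) (fun q' => ((f₂ q' : ℝ) : ℂ)) q
        + ((f₂ q : ℝ) : ℂ) * wop w₁ w₂ (-Complex.I) (fun q' => ((f₁ q' : ℝ) : ℂ)) q := by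
    funext q; rw [hmul]; exact wop_mul (hd1 q) (hd2 q)
  rw [hfirst,
    wop_add ((hd1 p).fun_mul ((hw2.differentiable (by simp)) p))
      ((hd2 p).fun_mul ((hw1.differentiable (by simp)) p)),
    wop_mul (hd1 p) ((hw2.differentiable (by simp)) p),
    wop_mul (hd2 p) ((hw1.differentiable (by simp)) p),
    wop_bar_real (h₁.differentiable (by simp) p),
    wop_bar_real (h₂.differentiable (by simp) p), hp]
  push_cast
  ring

end Aux

/-- if ρ is plurisubharmonic at a weakly pseudoconvex boundary
point p, then L_r(P)(p) = 0. -/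
theorem stmt14 (r X : ℂ × ℂ → ℝ) (hr : ContDiff ℝ (⊤ : ℕ∞) r) (hX : ContDiff ℝ (⊤ : ℕ∞) X)
    (p : ℂ × ℂ) (hrp : r p = 0) (hpsd : (hessMat r p).PosSemidef)
    (hLevi : Hform r p (Lvec r p) (Lvec r p) = 0) (hL : Lvec r p ≠ 0) (K : ℝ)
    (hρ : (hessMat (fun q => r q * (1 + K * r q + X q)) p).PosSemidef) :
    ww r p * wz (fun q => 1 + X q) p - wz r p * ww (fun q => 1 + X q) p = 0 := by
  classical
  set g : ℂ × ℂ → ℝ := fun q => 1 + K * r q + X q with hgdef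
  have hg : ContDiff ℝ (⊤ : ℕ∞) g := (contDiff_const.add (contDiff_const.mul hr)).add hX
  have hρ' : (hessMat (fun q => r q * g q) p).PosSemidef := hρ
  set az := wz r p with haz_def
  set aw := ww r p with haw_def
  set bz := wz g p with hbz_def
  set bw := ww g p with hbw_def
  set A := hzz r p with hA_def
  set B := hww r p with hB_def
  set C := hzw r p with hC_def
  set sC : ℂ := ((g p : ℝ) : ℂ) with hs_def
  have hcs : conj sC = sC := by rw [hs_def]; exact Complex.conj_ofReal _
  -- entries of the Hessian of ρ = r * g
  have e1 : hzz (fun q => r q * g q) p = sC * A + bz * conj az + az * conj bz := by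
    rw [hA_def, hzz_eq, hzz_eq, hess_prod _ _ _ _ hr hg hrp, haz_def, hbz_def, wz_eq, wz_eq]
  have e2 : hzw (fun q => r q * g q) p = sC * C + bz * conj aw + az * conj bw := by
    rw [hC_def, hzw_eq, hzw_eq, hess_prod _ _ _ _ hr hg hrp, haz_def, hbz_def, haw_def,
      hbw_def, wz_eq, wz_eq, ww_eq, ww_eq]
  have e3 : hww (fun q => r q * g q) p = sC * B + bw * conj aw + aw * conj bw := by
    rw [hB_def, hww_eq, hww_eq, hess_prod _ _ _ _ hr hg hrp, haw_def, hbw_def, ww_eq, ww_eq]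
  -- the Levi condition, rewritten
  have hLevi' : A * (aw * conj aw) + B * (az * conj az)
      - C * (aw * conj az) - conj C * (az * conj aw) = 0 := by
    simp only [Hform, Lvec, map_neg] at hLevi
    linear_combination hLevi
  -- the null vector
  set x : Fin 2 → ℂ := ![conj aw, -conj az] with hx_def
  have hMr : hessMat r p *ᵥ x = 0 := by
    rw [← hpsd.dotProduct_mulVec_zero_iff x]
    simp only [hessMat, hx_def, mulVec, dotProduct, Fin.sum_univ_two, Pi.star_apply,
      Matrix.of_apply, Matrix.cons_val', Matrix.cons_val_zero, Matrix.cons_val_one,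
      Matrix.head_cons, Matrix.empty_val', Matrix.cons_val_fin_one, Matrix.head_fin_const,
      RCLike.star_def, _root_.map_neg, conj_conj]
    linear_combination hLevi'
  have hMρ : hessMat (fun q => r q * g q) p *ᵥ x = 0 := by
    rw [← hρ'.dotProduct_mulVec_zero_iff x]
    simp only [hessMat, hx_def, mulVec, dotProduct, Fin.sum_univ_two, Pi.star_apply,
      Matrix.of_apply, Matrix.cons_val', Matrix.cons_val_zero, Matrix.cons_val_one,
      Matrix.head_cons, Matrix.empty_val', Matrix.cons_val_fin_one, Matrix.head_fin_const,
      RCLike.star_def, _root_.map_neg, conj_conj, e1, e2, e3, _root_.map_add,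
      _root_.map_mul, Complex.conj_ofReal, hcs]
    linear_combination ((g p : ℝ) : ℂ) * hLevi'
  -- component equations
  have kz : az * (conj aw * conj bz - conj az * conj bw) = 0 := by
    have h0 := congrFun hMρ 0
    have h1 := congrFun hMr 0
    simp only [hessMat, hx_def, mulVec, dotProduct, Fin.sum_univ_two, Matrix.of_apply,
      Matrix.cons_val', Matrix.cons_val_zero, Matrix.cons_val_one, Matrix.head_cons,
      Matrix.empty_val', Matrix.cons_val_fin_one, Matrix.head_fin_const, Pi.zero_apply,
      e1, e2, ← hA_def, ← hC_def] at h0 h1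
    linear_combination h0 - sC * h1
  have kw : aw * (conj aw * conj bz - conj az * conj bw) = 0 := by
    have h0 := congrFun hMρ 1
    have h1 := congrFun hMr 1
    simp only [hessMat, hx_def, mulVec, dotProduct, Fin.sum_univ_two, Matrix.of_apply,
      Matrix.cons_val', Matrix.cons_val_zero, Matrix.cons_val_one, Matrix.head_cons,
      Matrix.empty_val', Matrix.cons_val_fin_one, Matrix.head_fin_const, Pi.zero_apply,
      e2, e3, _root_.map_add, _root_.map_mul, conj_conj, Complex.conj_ofReal, hcs,
      ← hB_def, ← hC_def] at h0 h1
    linear_combination h0 - sC * h1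
  have hT : aw * bz - az * bw = 0 := by
    by_contra hne
    have hcne : conj aw * conj bz - conj az * conj bw ≠ 0 := by
      intro h0
      apply hne
      have := congrArg conj h0
      simpa [map_sub, _root_.map_mul, conj_conj] using this
    have haz : az = 0 := by
      rcases mul_eq_zero.mp kz with h | h
      · exact h
      · exact absurd h hcne
    have haw : aw = 0 := by
      rcases mul_eq_zero.mp kw with h | h
      · exact h
      · exact absurd h hcne
    apply hL
    have : Lvec r p = (aw, -az) := rfl
    rw [this, haz, haw]
    simp [Prod.ext_iff]
  -- linearity: bz = K az + (1+X)_z, bw = K aw + (1+X)_w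
  have hdr : Differentiable ℝ (fun q => ((r q : ℝ) : ℂ)) :=
    (contDiff_ofReal_comp hr).differentiable (by simp)
  have hdX : Differentiable ℝ (fun q => ((1 + X q : ℝ) : ℂ)) :=
    (contDiff_ofReal_comp (contDiff_const.add hX)).differentiable (by simp)
  have hgsplit : (fun q => ((g q : ℝ) : ℂ))
      = fun q => (K : ℂ) * ((r q : ℝ) : ℂ) + ((1 + X q : ℝ) : ℂ) := by
    funext q; rw [hgdef]; push_cast; ring
  have hbz : bz = (K : ℂ) * az + wz (fun q => 1 + X q) p := by
    rw [hbz_def, haz_def, wz_eq, wz_eq, wz_eq, hgsplit,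
      wop_add ((hdr p).const_mul _) (hdX p), wop_const_mul (hdr p)]
  have hbw : bw = (K : ℂ) * aw + ww (fun q => 1 + X q) p := by
    rw [hbw_def, haw_def, ww_eq, ww_eq, ww_eq, hgsplit,
      wop_add ((hdr p).const_mul _) (hdX p), wop_const_mul (hdr p)]
  rw [hbz, hbw] at hT
  linear_combination hT
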